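/- Let X be a real Hilbert space, let A, B : X ⇉ X be monotone set-valued operators with total resolvent selections J_A, J_B, let T be the Douglas–Rachford operator of (A,B), and let w ∈ X. Then {x ∈ X : x = T(x + w)} = −w + {x ∈ X : x = T x + w} = ⋃_{z ∈ X} ( z + ((B z − w) ∩ (−A(z − w))) ). -/
import Mathlib


open Pointwise
open scoped RealInnerProductSpace

lemma res_unique {X : Type*} [NormedAddCommGroup X] [InnerProductSpace ℝ X]
    (A : X → Set X)
    (hA : ∀ x y x' y' : X, x' ∈ A x → y' ∈ A y → 0 ≤ ⟪x - y, x' - y'⟫)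
    (JA : X → X) (hJA : ∀ x : X, x - JA x ∈ A (JA x))
    (u z : X) (h : u - z ∈ A z) : JA u = z := by
  have h1 := hJA u
  have h2 := hA z (JA u) (u - z) (u - JA u) h h1
  have h3 : (u - z) - (u - JA u) = -(z - JA u) := by abel
  rw [h3, inner_neg_right, real_inner_self_eq_norm_sq] at h2
  have h4 : ‖z - JA u‖ = 0 := by nlinarith [norm_nonneg (z - JA u)]
  have : z - JA u = 0 := by simpa using h4
  have := sub_eq_zero.mp this
  exact this.symm

/-- `{x : x = T (x + w)} = -w + {x : x = T x + w}
= ⋃_z (z + ((B z - w) ∩ (-A (z - w))))`. -/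
theorem stmt8 {X : Type*} [NormedAddCommGroup X] [InnerProductSpace ℝ X] [CompleteSpace X]
    (A B : X → Set X)
    (hA : ∀ x y x' y' : X, x' ∈ A x → y' ∈ A y → 0 ≤ ⟪x - y, x' - y'⟫)
    (hB : ∀ x y x' y' : X, x' ∈ B x → y' ∈ B y → 0 ≤ ⟪x - y, x' - y'⟫)
    (JA JB : X → X)
    (hJA : ∀ x : X, x - JA x ∈ A (JA x)) (hJB : ∀ x : X, x - JB x ∈ B (JB x))
    (T : X → X) (hT : ∀ x : X, T x = JA (2 • JB x - x) + x - JB x) (w : X) :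
    ({x : X | x = T (x + w)} = (fun u => -w + u) '' {x : X | x = T x + w}) ∧
    ({x : X | x = T (x + w)}
      = {x : X | ∃ z y : X,
          y ∈ ((fun b => b - w) '' B z) ∩ (-(A (z - w))) ∧ x = z + y}) := by
  constructor
  · ext x
    simp only [Set.mem_setOf_eq, Set.mem_image]
    constructor
    · intro hx
      exact ⟨x + w, by nth_rewrite 1 [hx]; abel, by abel⟩
    · rintro ⟨a, ha, rfl⟩
      have : -w + a + w = a := by abel
      rw [this]
      nth_rewrite 1 [ha]
      abel
  · ext x
    simp only [Set.mem_setOf_eq, Set.mem_inter_iff, Set.mem_image, Set.mem_neg]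
    constructor
    · intro hx
      set z := JB (x + w) with hz
      refine ⟨z, x - z, ⟨⟨(x + w) - z, hJB (x + w), by abel⟩, ?_⟩, by abel⟩
      -- need -(x - z) ∈ A (z - w), i.e. z - x ∈ A (z - w)
      have hfix : JA (2 • JB (x + w) - (x + w)) = z - w := by
        have := hT (x + w)
        rw [← hz] at this ⊢
        rw [this] at hx
        have : JA (2 • z - (x + w)) = x - (x + w - z) := by
          nth_rewrite 2 [hx]; abel
        rw [this]; abel
      have hmem := hJA (2 • JB (x + w) - (x + w))
      rw [hfix, ← hz] at hmem
      have heq : 2 • z - (x + w) - (z - w) = -(x - z) := by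
        rw [two_smul]; abel
      rwa [heq] at hmem
    · rintro ⟨z, y, ⟨⟨b, hb, hby⟩, hay⟩, rfl⟩
      have hyb : y + w ∈ B z := by
        have : y + w = b := by rw [← hby]; abel
        rwa [this]
      have hJBz : JB (z + y + w) = z := by
        apply res_unique B hB JB hJB
        have : z + y + w - z = y + w := by abel
        rwa [this]
      have hJAz : JA (2 • JB (z + y + w) - (z + y + w)) = z - w := by
        apply res_unique A hA JA hJA
        have : 2 • JB (z + y + w) - (z + y + w) - (z - w) = -y := by
          rw [hJBz, two_smul]; abel
        rwa [this]
      rw [hT (z + y + w), hJAz, hJBz]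
      abel
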